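/- For all i, j ∈ F_q and every z ∈ Z \ {e}, the number of pairs (u,v) ∈ Y_i × Y_j with uv = z equals 0 if j = −i, and equals q + 1 if j ≠ −i. -/

import Mathlib

/-- The Heisenberg group `H₃(F)` of upper unitriangular 3×3 matrices over `F`,
recorded by the three free entries: `x` in position (1,2), `y` in position (2,3),
`z` in position (1,3). -/
@[ext]
structure Heis (F : Type*) where
  x : F
  y : F
  z : F
deriving DecidableEq

namespace Heis

variable {F : Type*} [Field F]

/-- Multiplication corresponding to the matrix product. -/
instance : Group (Heis F) where
  mul a b := ⟨a.x + b.x, a.y + b.y, a.z + b.z + a.x * b.y⟩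
  one := ⟨0, 0, 0⟩
  inv a := ⟨-a.x, -a.y, -a.z + a.x * a.y⟩
  mul_assoc a b c := Heis.ext
    (show a.x + b.x + c.x = a.x + (b.x + c.x) by ring)
    (show a.y + b.y + c.y = a.y + (b.y + c.y) by ring)
    (show a.z + b.z + a.x * b.y + c.z + (a.x + b.x) * c.y
        = a.z + (b.z + c.z + b.x * c.y) + a.x * (b.y + c.y) by ring)
  one_mul a := Heis.ext
    (show (0 : F) + a.x = a.x by ring)
    (show (0 : F) + a.y = a.y by ring)
    (show (0 : F) + a.z + 0 * a.y = a.z by ring)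
  mul_one a := Heis.ext
    (show a.x + 0 = a.x by ring)
    (show a.y + 0 = a.y by ring)
    (show a.z + 0 + a.x * 0 = a.z by ring)
  inv_mul_cancel a := Heis.ext
    (show -a.x + a.x = 0 by ring)
    (show -a.y + a.y = 0 by ring)
    (show -a.z + a.x * a.y + a.z + -a.x * a.y = 0 by ring)

instance [Fintype F] : Fintype (Heis F) :=
  Fintype.ofEquiv (F × F × F)
    ⟨fun p => ⟨p.1, p.2.1, p.2.2⟩, fun a => (a.x, a.y, a.z), fun _ => rfl, fun _ => rfl⟩

end Heis

/-- The element `g(x,y,z)` of the Heisenberg group. -/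
def gElt {F : Type*} (x y z : F) : Heis F := ⟨x, y, z⟩

/-- The center `Z = {g(0,0,z) : z ∈ F}` of the Heisenberg group, as a set. -/
def Zset (F : Type*) [Field F] : Set (Heis F) := {g : Heis F | g.x = 0 ∧ g.y = 0}

/-- The center `Z` as a subgroup of the Heisenberg group. -/
def Zsub (F : Type*) [Field F] : Subgroup (Heis F) where
  carrier := Zset F
  mul_mem' := fun {a b} ha hb =>
    ⟨show a.x + b.x = 0 by rw [ha.1, hb.1, add_zero],
     show a.y + b.y = 0 by rw [ha.2, hb.2, add_zero]⟩
  one_mem' := ⟨rfl, rfl⟩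
  inv_mem' := fun {a} ha =>
    ⟨show -a.x = 0 by rw [ha.1, neg_zero],
     show -a.y = 0 by rw [ha.2, neg_zero]⟩

/-- `γ_i(α,β) = αβ/2 + (α² − εβ²)i`. -/
def gam {F : Type*} [Field F] (ε i α β : F) : F := α * β / 2 + (α ^ 2 - ε * β ^ 2) * i

/-- `Y_i = {g(α, β, γ_i(α,β)) : (α,β) ≠ (0,0)}`. -/
def Yset {F : Type*} [Field F] (ε i : F) : Set (Heis F) :=
  {g : Heis F | ∃ α β : F, (α, β) ≠ (0, 0) ∧ g = gElt α β (gam ε i α β)}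

/-- `X_i = Y_i ∪ {e}`. -/
def Xset {F : Type*} [Field F] (ε i : F) : Set (Heis F) := Yset ε i ∪ {1}

/-- The map `ρ(M) : G → G` attached to the matrix `M = [[α,β],[εβ,α]]`. -/
def rho {F : Type*} [Field F] (ε α β : F) : Heis F → Heis F := fun g =>
  gElt (α * g.x + ε * β * g.y) (β * g.x + α * g.y)
    (α * β * (g.x ^ 2 / 2 + ε * g.y ^ 2 / 2) + ε * β ^ 2 * g.x * g.y
      + (α ^ 2 - ε * β ^ 2) * g.z)

/-- `K = {ρ(M) : M = [[α,β],[εβ,α]], (α,β) ≠ (0,0)}`, as a set of maps `G → G`. -/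
def Kset {F : Type*} [Field F] (ε : F) : Set (Heis F → Heis F) :=
  {f | ∃ α β : F, (α, β) ≠ (0, 0) ∧ f = rho ε α β}

/-- The family of sets `{e}`, `Z \ {e}`, `Y_i` for `i ∈ F`. -/
def SFam {F : Type*} [Field F] (ε : F) : Set (Set (Heis F)) :=
  insert {1} (insert (Zset F \ {1}) {S | ∃ i : F, S = Yset ε i})

/-- `f` preserves each of the basic sets `{e}`, `Z \ {e}`, `Y_i`:
`hg⁻¹ ∈ S ↔ f(h)f(g)⁻¹ ∈ S`. -/
def Preserves {F : Type*} [Field F] (ε : F) (f : Heis F → Heis F) : Prop :=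
  ∀ S ∈ SFam ε, ∀ g h : Heis F, h * g⁻¹ ∈ S ↔ f h * (f g)⁻¹ ∈ S

/-- The set of permutations of `G` of the form `x ↦ σ(x)·c` with `σ ∈ K`, `c ∈ G`. -/
def Aset {F : Type*} [Field F] (ε : F) : Set (Equiv.Perm (Heis F)) :=
  {f | ∃ σ ∈ Kset ε, ∃ c : Heis F, ∀ x : Heis F, f x = σ x * c}

/-- The operation `ψ` on `F ∪ {∞}`, with `∞` encoded as `none`. -/
def psi {F : Type*} [Field F] [DecidableEq F] (ε : F) : Option F → Option F → Option F
  | none, j => j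
  | some i, none => some i
  | some i, some j => if i + j = 0 then none else some ((i * j + ε / 16) / (i + j))

/-- `Y_k` for `k ∈ F ∪ {∞}`, where `Y_∞ = Z \ {e}`. -/
def YInf {F : Type*} [Field F] (ε : F) : Option F → Set (Heis F)
  | some i => Yset ε i
  | none => Zset F \ {1}

/-!
Write `N(α, β) = α² − εβ²` and `z = g(0, 0, c)` with `c ≠ 0`. Since
`γ_i(α, β) + γ_j(−α, −β) = αβ + N(α, β)(i + j)`, an element `u = g(α, β, γ_i(α, β))` of `Y_i`
has `u⁻¹z ∈ Y_j` exactly when `N(α, β)(i + j) = c`; as `v = u⁻¹z` is determined by `u`, the pairs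
correspond to the solutions `(α, β) ≠ 0` of this equation. There are none when `i + j = 0`.
Otherwise they form a fibre of the norm `F(√ε)^× → F^×`, a surjective homomorphism between
groups of orders `q² − 1` and `q − 1`, so each fibre has `q + 1` elements.
-/

theorem MonoidHom.card_preimage_singleton_mul_card {G H : Type*} [Group G] [Group H]
    {f : G →* H} (hf : Function.Surjective f) (h : H) :
    Nat.card (f ⁻¹' {h}) * Nat.card H = Nat.card G := by
  rw [Nat.card_congr (f.fiberEquivKerOfSurjective hf h), ← f.ker.card_mul_index,
    Subgroup.index_ker, f.range_eq_top.mpr hf, Subgroup.card_top]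

namespace QuadraticAlgebra

variable {K : Type*} [Field K] {a : K}

lemma norm_mk_zero (x y : K) : norm (⟨x, y⟩ : QuadraticAlgebra K a 0) = x ^ 2 - a * y ^ 2 := by
  rw [norm_def]; ring

lemma isUnit_mk_zero {x y : K} (h : x ^ 2 - a * y ^ 2 ≠ 0) :
    IsUnit (⟨x, y⟩ : QuadraticAlgebra K a 0) :=
  isUnit_iff_norm_isUnit.mpr (by rw [norm_mk_zero]; exact h.isUnit)

theorem unitsMap_norm_surjective [Fintype K] (hK : Fintype.card K % 2 = 1) (ha : a ≠ 0) :
    Function.Surjective (Units.map (norm : QuadraticAlgebra K a 0 →* K)) := by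
  intro d
  obtain ⟨x, y, hxy⟩ := FiniteField.exists_root_sum_quadratic
    (f := Polynomial.X ^ 2) (g := .C (-a) * .X ^ 2 + .C 0 * .X + .C (-(d : K)))
    (Polynomial.degree_X_pow 2) (Polynomial.degree_quadratic (neg_ne_zero.mpr ha)) hK
  simp only [Polynomial.eval_add, Polynomial.eval_mul, Polynomial.eval_pow,
    Polynomial.eval_X, Polynomial.eval_C] at hxy
  have hnorm : x ^ 2 - a * y ^ 2 = d := by linear_combination hxy
  exact ⟨(isUnit_mk_zero (hnorm ▸ d.ne_zero)).unit, Units.ext (by simpa [norm_mk_zero] using hnorm)⟩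

noncomputable def normFiberEquiv {d : K} (hd : d ≠ 0) :
    {p : K × K // p.1 ^ 2 - a * p.2 ^ 2 = d} ≃
      Units.map (norm : QuadraticAlgebra K a 0 →* K) ⁻¹' {Units.mk0 d hd} where
  toFun p := ⟨(isUnit_mk_zero (p.2 ▸ hd)).unit, Units.ext (by simpa [norm_mk_zero] using p.2)⟩
  invFun u := ⟨((u.1 : QuadraticAlgebra K a 0).re, (u.1 : QuadraticAlgebra K a 0).im), by
    simpa [← norm_mk_zero] using congrArg Units.val u.2⟩
  left_inv _ := rfl
  right_inv _ := by ext <;> rfl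

end QuadraticAlgebra

open QuadraticAlgebra in
theorem FiniteField.card_sq_sub_mul_sq_eq {K : Type*} [Field K] [Fintype K]
    (hK : Fintype.card K % 2 = 1) {a : K} (ha : ¬IsSquare a) {d : K} (hd : d ≠ 0) :
    Nat.card {p : K × K // p.1 ^ 2 - a * p.2 ^ 2 = d} = Fintype.card K + 1 := by
  have : Fact (∀ r : K, r ^ 2 ≠ a + 0 * r) := ⟨fun r hr => ha ⟨r, by linear_combination -hr⟩⟩
  have ha0 : a ≠ 0 := by rintro rfl; exact ha ⟨0, by ring⟩
  have hcard := MonoidHom.card_preimage_singleton_mul_card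
    (QuadraticAlgebra.unitsMap_norm_surjective hK ha0) (Units.mk0 d hd)
  rw [← Nat.card_congr (normFiberEquiv hd), Nat.card_units, Nat.card_units,
    Nat.card_congr (equivProd a 0), Nat.card_prod, mul_self_tsub_one] at hcard
  rw [← Nat.card_eq_fintype_card]
  exact Nat.eq_of_mul_eq_mul_right (Nat.sub_pos_of_lt Finite.one_lt_card) hcard

def Set.mulAntidiagonalEquivOfGroup {G : Type*} [Group G] (A B : Set G) (z : G) :
    Set.mulAntidiagonal A B z ≃ {u : G // u ∈ A ∧ u⁻¹ * z ∈ B} where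
  toFun p := ⟨p.1.1, p.2.1, by rw [inv_mul_eq_of_eq_mul p.2.2.2.symm]; exact p.2.2.1⟩
  invFun u := ⟨(u.1, u.1⁻¹ * z), u.2.1, u.2.2, mul_inv_cancel_left _ _⟩
  left_inv p := by
    ext
    · rfl
    · simp [← p.2.2.2]
  right_inv _ := rfl

section gElt

variable {F : Type*}

@[simp] lemma gElt_x (a b c : F) : (gElt a b c).x = a := rfl
@[simp] lemma gElt_y (a b c : F) : (gElt a b c).y = b := rfl
@[simp] lemma gElt_z (a b c : F) : (gElt a b c).z = c := rfl

end gElt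

namespace Heis

variable {F : Type*} [Field F]

@[simp] lemma mul_x (a b : Heis F) : (a * b).x = a.x + b.x := rfl
@[simp] lemma mul_y (a b : Heis F) : (a * b).y = a.y + b.y := rfl
@[simp] lemma mul_z (a b : Heis F) : (a * b).z = a.z + b.z + a.x * b.y := rfl
@[simp] lemma inv_x (a : Heis F) : a⁻¹.x = -a.x := rfl
@[simp] lemma inv_y (a : Heis F) : a⁻¹.y = -a.y := rfl
@[simp] lemma inv_z (a : Heis F) : a⁻¹.z = -a.z + a.x * a.y := rfl

end Heis

section Yset

variable {F : Type*} [Field F] {ε : F}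

lemma gam_add_gam_neg (h2 : (2 : F) ≠ 0) (i j α β : F) :
    gam ε i α β + gam ε j (-α) (-β) = α * β + (α ^ 2 - ε * β ^ 2) * (i + j) := by
  simp only [gam]
  field_simp
  ring

lemma mem_Yset_iff {i : F} {u : Heis F} :
    u ∈ Yset ε i ↔ (u.x, u.y) ≠ (0, 0) ∧ u.z = gam ε i u.x u.y := by
  constructor
  · rintro ⟨α, β, hαβ, rfl⟩
    exact ⟨hαβ, rfl⟩
  · rintro ⟨hxy, hz⟩
    exact ⟨u.x, u.y, hxy, Heis.ext rfl rfl hz⟩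

lemma inv_mul_central_mem_Yset_iff (h2 : (2 : F) ≠ 0) {i j c : F} {u : Heis F}
    (hu : u ∈ Yset ε i) :
    u⁻¹ * gElt 0 0 c ∈ Yset ε j ↔ (u.x ^ 2 - ε * u.y ^ 2) * (i + j) = c := by
  obtain ⟨hxy, hz⟩ := mem_Yset_iff.mp hu
  have hxy' : (-u.x, -u.y) ≠ (0, 0) := by simpa using hxy
  simp only [mem_Yset_iff, Heis.mul_x, Heis.mul_y, Heis.mul_z, Heis.inv_x, Heis.inv_y,
    Heis.inv_z, gElt_x, gElt_y, gElt_z, add_zero, mul_zero, ne_eq, hxy', not_false_eq_true,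
    true_and, hz]
  have := gam_add_gam_neg (ε := ε) h2 i j u.x u.y
  constructor <;> intro h <;> linear_combination -(this + h)

def subtypeYsetEquiv (i : F) (P : F × F → Prop) :
    {u : Heis F // u ∈ Yset ε i ∧ P (u.x, u.y)} ≃ {q : F × F // q ≠ (0, 0) ∧ P q} where
  toFun u := ⟨(u.1.x, u.1.y), (mem_Yset_iff.mp u.2.1).1, u.2.2⟩
  invFun q := ⟨gElt q.1.1 q.1.2 (gam ε i q.1.1 q.1.2), ⟨q.1.1, q.1.2, q.2.1, rfl⟩, q.2.2⟩
  left_inv u := Subtype.ext (Heis.ext rfl rfl (mem_Yset_iff.mp u.2.1).2.symm)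
  right_inv _ := rfl

end Yset

/-- For all `i, j ∈ F_q` and every `z ∈ Z \ {e}`, the number of pairs
`(u,v) ∈ Y_i × Y_j` with `uv = z` equals `0` if `j = −i`, and `q + 1` if `j ≠ −i`. -/
theorem statement_5 {F : Type*} [Field F] [Fintype F] [DecidableEq F]
    (hodd : Odd (Fintype.card F)) (ε : F) (hε : ¬IsSquare ε)
    (i j : F) (z : Heis F) (hz : z ∈ Zset F \ {1}) :
    Nat.card {p : Heis F × Heis F // p.1 ∈ Yset ε i ∧ p.2 ∈ Yset ε j ∧ p.1 * p.2 = z} =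
      if j = -i then 0 else Fintype.card F + 1 := by
  obtain ⟨⟨hzx, hzy⟩, hz1⟩ := hz
  obtain ⟨c, rfl⟩ : ∃ c, z = gElt 0 0 c := ⟨z.z, Heis.ext hzx hzy rfl⟩
  have hc : c ≠ 0 := by rintro rfl; exact hz1 rfl
  have hq : Fintype.card F % 2 = 1 := Nat.odd_iff.mp hodd
  have h2 : (2 : F) ≠ 0 := Ring.two_ne_zero fun h => by
    rw [FiniteField.even_card_iff_char_two] at h; omega
  calc Nat.card (Set.mulAntidiagonal (Yset ε i) (Yset ε j) (gElt 0 0 c))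
      = Nat.card {u : Heis F // u ∈ Yset ε i ∧ (u.x ^ 2 - ε * u.y ^ 2) * (i + j) = c} :=
        Nat.card_congr <| (Set.mulAntidiagonalEquivOfGroup _ _ _).trans <|
          Equiv.subtypeEquivRight fun _ => and_congr_right (inv_mul_central_mem_Yset_iff h2)
    _ = Nat.card {q : F × F // q ≠ (0, 0) ∧ (q.1 ^ 2 - ε * q.2 ^ 2) * (i + j) = c} :=
        Nat.card_congr (subtypeYsetEquiv i fun q => (q.1 ^ 2 - ε * q.2 ^ 2) * (i + j) = c)
    _ = if j = -i then 0 else Fintype.card F + 1 := by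
      split_ifs with hj
      · subst hj
        refine Nat.card_eq_zero.mpr (.inl ⟨fun ⟨q, _, hN⟩ => hc ?_⟩)
        rw [← hN, add_neg_cancel, mul_zero]
      · have hij : i + j ≠ 0 := fun h => hj (eq_neg_of_add_eq_zero_right h)
        rw [← FiniteField.card_sq_sub_mul_sq_eq hq hε (div_ne_zero hc hij)]
        refine Nat.card_congr (Equiv.subtypeEquivRight fun q => ?_)
        rw [eq_div_iff hij, and_iff_right_iff_imp]
        rintro hN rfl
        simp [hc.symm] at hN
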